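/- For all α > −1/2 and n ∈ ℕ, as ε → 0⁺ the rescaled function H_{2n}^{ε^{-2}}(εx) = (cosh εx)^{−α−β−ε^{-2}−2} P_n^{(α,ε^{-2})}(1 − 2 tanh²(εx)) converges pointwise to e^{−x²/2} L_n^α(x²), where L_n^a is the Laguerre polynomial L_n^a(t) = ((a+1)_n/n!) ₁F₁(−n; a+1; t). -/

import Mathlib

open Finset Filter

noncomputable def poch (a : ℝ) (k : ℕ) : ℝ := (ascPochhammer ℝ k).eval a

noncomputable def jacobiP (n : ℕ) (a b z : ℝ) : ℝ :=
  (poch (a + 1) n / (n.factorial : ℝ)) *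
    ∑ k ∈ range (n + 1),
      ((-1 : ℝ) ^ k * ((n.factorial : ℝ) / ((n - k).factorial : ℝ)) * poch (a + b + n + 1) k /
          (poch (a + 1) k * (k.factorial : ℝ))) * ((1 - z) / 2) ^ k

/-- Laguerre polynomial L_n^a(t) = ((a+1)_n/n!) ₁F₁(-n; a+1; t). -/
noncomputable def laguerreL (n : ℕ) (a t : ℝ) : ℝ :=
  (poch (a + 1) n / (n.factorial : ℝ)) *
    ∑ k ∈ range (n + 1),
      ((-1 : ℝ) ^ k * ((n.factorial : ℝ) / ((n - k).factorial : ℝ)) /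
          (poch (a + 1) k * (k.factorial : ℝ))) * t ^ k

/-!
Both factors have elementary limits. Since `tanh² t ≤ 2 log cosh t ≤ sinh² t`, and
`tanh (εx) / ε`, `sinh (εx) / ε` both tend to `x`, we get `ε⁻² log cosh (εx) → x² / 2`, whence
`cosh (εx) ^ (c - ε⁻²) → exp (-x² / 2)`. The Jacobi polynomial is a finite hypergeometric sum whose
`k`-th term carries `(α + ε⁻² + n + 1)_k tanh²ᵏ (εx)`, a product of `k` factors each tending to `x²`;
termwise this gives the Laguerre polynomial at `x²`.
-/

open Topology

namespace Real

theorem hasDerivAt_tanh (t : ℝ) : HasDerivAt tanh (1 / cosh t ^ 2) t := by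
  have h := (hasDerivAt_sinh t).div (hasDerivAt_cosh t) (cosh_pos t).ne'
  rw [show cosh t * cosh t - sinh t * sinh t = 1 by nlinarith [cosh_sq_sub_sinh_sq t]] at h
  exact h.congr_of_eventuallyEq (Eventually.of_forall fun s => tanh_eq_sinh_div_cosh s)

theorem tanh_sq_le_two_mul_log_cosh (t : ℝ) : tanh t ^ 2 ≤ 2 * log (cosh t) := by
  have h := one_sub_inv_le_log_of_pos (pow_pos (cosh_pos t) 2)
  rw [log_pow, Nat.cast_ofNat] at h
  convert h using 1
  rw [tanh_eq_sinh_div_cosh, div_pow, sinh_sq]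
  field_simp

theorem two_mul_log_cosh_le_sinh_sq (t : ℝ) : 2 * log (cosh t) ≤ sinh t ^ 2 := by
  have h := log_le_sub_one_of_pos (pow_pos (cosh_pos t) 2)
  rw [log_pow, Nat.cast_ofNat] at h
  linarith [cosh_sq t]

end Real

open Real

theorem tendsto_sq_comp_mul_div_sq {f : ℝ → ℝ} {f' : ℝ} (hf : HasDerivAt f f' 0) (hf0 : f 0 = 0)
    (x : ℝ) : Tendsto (fun ε => f (ε * x) ^ 2 / ε ^ 2) (𝓝[≠] 0) (𝓝 ((f' * x) ^ 2)) := by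
  rw [← zero_mul x] at hf
  have hg := (hf.comp (0 : ℝ) (hasDerivAt_mul_const x)).tendsto_slope_zero
  refine (hg.pow 2).congr fun ε => ?_
  simp [hf0, div_eq_inv_mul, mul_pow, inv_pow]

theorem tendsto_log_cosh_mul_div_sq (x : ℝ) :
    Tendsto (fun ε => log (cosh (ε * x)) / ε ^ 2) (𝓝[≠] 0) (𝓝 (x ^ 2 / 2)) := by
  have half_sq_scaled {f : ℝ → ℝ} (hf : HasDerivAt f 1 0) (hf0 : f 0 = 0) :
      Tendsto (fun ε => f (ε * x) ^ 2 / 2 / ε ^ 2) (𝓝[≠] 0) (𝓝 (x ^ 2 / 2)) := by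
    simpa [div_right_comm] using (tendsto_sq_comp_mul_div_sq hf hf0 x).div_const 2
  refine tendsto_of_tendsto_of_tendsto_of_le_of_le
    (half_sq_scaled (by simpa using hasDerivAt_tanh 0) tanh_zero)
    (half_sq_scaled (by simpa using hasDerivAt_sinh 0) sinh_zero) (fun ε => ?_) (fun ε => ?_)
  · exact div_le_div_of_nonneg_right (by linarith [tanh_sq_le_two_mul_log_cosh (ε * x)])
      (sq_nonneg ε)
  · exact div_le_div_of_nonneg_right (by linarith [two_mul_log_cosh_le_sinh_sq (ε * x)])
      (sq_nonneg ε)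

theorem tendsto_cosh_mul_rpow (c x : ℝ) :
    Tendsto (fun ε => cosh (ε * x) ^ (c - 1 / ε ^ 2)) (𝓝[≠] 0) (𝓝 (exp (-x ^ 2 / 2))) := by
  have hsq : Tendsto (fun ε : ℝ => ε ^ 2) (𝓝[≠] 0) (𝓝 0) := by
    simpa using ((continuous_pow 2).tendsto (0 : ℝ)).mono_left nhdsWithin_le_nhds
  have hexp := (((hsq.const_mul c).sub_const 1).mul (tendsto_log_cosh_mul_div_sq x)).rexp
  rw [show (c * 0 - 1) * (x ^ 2 / 2) = -x ^ 2 / 2 by ring] at hexp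
  refine hexp.congr' ?_
  filter_upwards [self_mem_nhdsWithin] with ε (hε : ε ≠ 0)
  rw [rpow_def_of_pos (cosh_pos _)]
  field_simp

theorem poch_mul_pow_eq_prod (a s : ℝ) (k : ℕ) :
    poch a k * s ^ k = ∏ j ∈ range k, (a + j) * s := by
  induction k with
  | zero => simp [poch]
  | succ k ih =>
    rw [prod_range_succ, ← ih, poch, poch, ascPochhammer_succ_eval]
    ring

theorem tendsto_poch_add_mul_pow {ι : Type*} {l : Filter ι} {b s : ι → ℝ} {t : ℝ} (a : ℝ)
    (hs : Tendsto s l (𝓝 0)) (hbs : Tendsto (fun i => b i * s i) l (𝓝 t)) (k : ℕ) :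
    Tendsto (fun i => poch (a + b i) k * s i ^ k) l (𝓝 (t ^ k)) := by
  have hfactor (j : ℕ) : Tendsto (fun i => (a + b i + j) * s i) l (𝓝 t) := by
    simpa using ((hs.const_mul (a + j)).add hbs).congr fun i => by ring
  simpa [poch_mul_pow_eq_prod] using tendsto_finsetProd (range k) fun j _ => hfactor j

theorem tendsto_jacobiP_laguerreL {ι : Type*} {l : Filter ι} {b s : ι → ℝ} {t : ℝ} (n : ℕ)
    (a : ℝ) (hs : Tendsto s l (𝓝 0)) (hbs : Tendsto (fun i => b i * s i) l (𝓝 t)) :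
    Tendsto (fun i => jacobiP n a (b i) (1 - 2 * s i)) l (𝓝 (laguerreL n a t)) := by
  refine (tendsto_finsetSum _ fun k _ => ?_).const_mul _
  refine ((tendsto_poch_add_mul_pow (a + n + 1) hs hbs k).const_mul
    ((-1 : ℝ) ^ k * ((n.factorial : ℝ) / ((n - k).factorial : ℝ)) /
      (poch (a + 1) k * (k.factorial : ℝ)))).congr fun i => ?_
  rw [show a + b i + n + 1 = a + n + 1 + b i by ring, show (1 - (1 - 2 * s i)) / 2 = s i by ring]
  ring

theorem H_even_to_hermite_limit_general (α β : ℝ)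
    (n : ℕ) (x : ℝ) :
    Tendsto
      (fun ε : ℝ =>
        Real.cosh (ε * x) ^ (-α - β - 1 / ε ^ 2 - 2) *
          jacobiP n α (1 / ε ^ 2) (1 - 2 * Real.tanh (ε * x) ^ 2))
      (nhdsWithin 0 (Set.Ioi 0))
      (nhds (Real.exp (-x ^ 2 / 2) * laguerreL n α (x ^ 2))) := by
  have hεx : Tendsto (fun ε => ε * x) (𝓝[≠] 0) (𝓝 0) := by
    simpa using ((continuous_mul_const x).tendsto 0).mono_left nhdsWithin_le_nhds
  have htanh : Tendsto (fun ε => tanh (ε * x) ^ 2) (𝓝[≠] 0) (𝓝 0) := by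
    simpa using ((hasDerivAt_tanh 0).continuousAt.tendsto.comp hεx).pow 2
  have hscaled : Tendsto (fun ε => 1 / ε ^ 2 * tanh (ε * x) ^ 2) (𝓝[≠] 0) (𝓝 (x ^ 2)) := by
    have h := tendsto_sq_comp_mul_div_sq (hasDerivAt_tanh 0) tanh_zero x
    rw [cosh_zero, one_pow, div_one, one_mul] at h
    exact h.congr fun ε => by ring
  have hlim := (tendsto_cosh_mul_rpow (-α - β - 2) x).mul
    (tendsto_jacobiP_laguerreL n α htanh hscaled)
  refine (hlim.mono_left (nhdsGT_le_nhdsNE 0)).congr fun ε => ?_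
  ring_nf

theorem H_even_to_hermite_limit (α β : ℝ) (h1 : α ≥ β) (h2 : β ≥ -(1/2)) (h3 : α > -(1/2))
    (n : ℕ) (x : ℝ) :
    Tendsto
      (fun ε : ℝ =>
        Real.cosh (ε * x) ^ (-α - β - 1 / ε ^ 2 - 2) *
          jacobiP n α (1 / ε ^ 2) (1 - 2 * Real.tanh (ε * x) ^ 2))
      (nhdsWithin 0 (Set.Ioi 0))
      (nhds (Real.exp (-x ^ 2 / 2) * laguerreL n α (x ^ 2))) :=
  H_even_to_hermite_limit_general α β n x
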